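/- arXiv:2505.07786 — 4 statements merged into one kernel-verified Lean document; each statement's English description precedes it below -/
import Mathlib

section
/- Let 0 ≤ a_1 ≤ a_2 and 0 ≤ b_1 ≤ b_2 with a_1 ≤ b_1 and a_1 + a_2 ≤ b_1 + b_2. Then the function x ↦ (Γ(x+a_1)Γ(x+a_2)) / (Γ(x+b_1)Γ(x+b_2)) is monotone decreasing on (0, ∞). -/
/-!
By Euler's limit formula, `Γ(x + a) / Γ(x + b)` is the limit of
`n ^ (a - b) * ∏_{j ≤ n} (x + b + j) / (x + a + j)`, so the function in question is the pointwise
limit of positive multiples of products of the rational functions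
`(x + b₁ + j)(x + b₂ + j) / ((x + a₁ + j)(x + a₂ + j))`. Each of these is positive and
decreasing on `(0, ∞)` by an elementary polynomial inequality, and monotonicity survives
products of nonnegative factors and pointwise limits.
-/

open Filter Finset Topology

namespace Real

lemma antitoneOn_div_mul_div {A₁ A₂ B₁ B₂ : ℝ} (hA₁ : 0 ≤ A₁) (hA : A₁ ≤ A₂) (hB : B₁ ≤ B₂)
    (h1 : A₁ ≤ B₁) (h2 : A₁ + A₂ ≤ B₁ + B₂) :
    AntitoneOn (fun z => (z + B₁) / (z + A₁) * ((z + B₂) / (z + A₂))) (Set.Ioi 0) := by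
  intro x (hx : 0 < x) y (hy : 0 < y) hxy
  have hB₁ : 0 ≤ B₁ := hA₁.trans h1
  have hprod : A₁ * A₂ ≤ B₁ * B₂ := by
    nlinarith [mul_nonneg (sub_nonneg.2 h1) (sub_nonneg.2 (h1.trans hB)),
      mul_nonneg hA₁ (sub_nonneg.2 h2)]
  have hcross : A₁ * B₁ ≤ A₂ * B₂ := mul_le_mul hA hB hB₁ (hA₁.trans hA)
  have hharm : (B₁ + B₂) * (A₁ * A₂) ≤ B₁ * B₂ * (A₁ + A₂) := by
    nlinarith [mul_nonneg (mul_nonneg hB₁ hA₁) (sub_nonneg.2 h2),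
      mul_nonneg (sub_nonneg.2 h1) (sub_nonneg.2 hcross)]
  -- the cross-multiplied difference of the two sides factors as `(y - x) * G x y`
  have hG : 0 ≤ (B₁ + B₂ - (A₁ + A₂)) * (x * y) + (B₁ * B₂ - A₁ * A₂) * (x + y)
      + (B₁ * B₂ * (A₁ + A₂) - (B₁ + B₂) * (A₁ * A₂)) := by
    have := mul_nonneg (sub_nonneg.2 h2) (mul_nonneg hx.le hy.le)
    have := mul_nonneg (sub_nonneg.2 hprod) (add_nonneg hx.le hy.le)
    linarith
  simp only [div_mul_div_comm]
  rw [div_le_div_iff₀ (by nlinarith) (by nlinarith)]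
  linear_combination mul_nonneg (sub_nonneg.2 hxy) hG

lemma GammaSeq_div_GammaSeq {s t : ℝ} (hs : 0 < s) (ht : 0 < t) {n : ℕ} (hn : n ≠ 0) :
    GammaSeq s n / GammaSeq t n = (n : ℝ) ^ (s - t) * ∏ j ∈ range (n + 1), (t + j) / (s + j) := by
  have hn' : (0 : ℝ) < n := by positivity
  have hpos (u : ℝ) (hu : 0 < u) : ∏ j ∈ range (n + 1), (u + j) ≠ 0 :=
    (prod_pos fun j _ => by positivity).ne'
  rw [GammaSeq, GammaSeq, prod_div_distrib, rpow_sub hn']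
  field_simp [hpos s hs, hpos t ht, (rpow_pos_of_pos hn' t).ne']

lemma antitoneOn_GammaSeq_div_mul_div {a₁ a₂ b₁ b₂ : ℝ} (ha₁ : 0 ≤ a₁) (ha : a₁ ≤ a₂)
    (hb : b₁ ≤ b₂) (h1 : a₁ ≤ b₁) (h2 : a₁ + a₂ ≤ b₁ + b₂) {n : ℕ} (hn : n ≠ 0) :
    AntitoneOn (fun x => GammaSeq (x + a₁) n / GammaSeq (x + b₁) n *
      (GammaSeq (x + a₂) n / GammaSeq (x + b₂) n)) (Set.Ioi 0) := by
  have hfactor (j : ℕ) : AntitoneOn (fun x => (x + b₁ + j) / (x + a₁ + j) *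
      ((x + b₂ + j) / (x + a₂ + j))) (Set.Ioi 0) := by
    simpa only [add_assoc] using antitoneOn_div_mul_div (A₁ := a₁ + j) (A₂ := a₂ + j)
      (B₁ := b₁ + j) (B₂ := b₂ + j) (by positivity) (by linarith) (by linarith)
      (by linarith) (by linarith)
  have hprod : AntitoneOn (fun x => (n : ℝ) ^ (a₁ - b₁) * (n : ℝ) ^ (a₂ - b₂) *
      ∏ j ∈ range (n + 1), ((x + b₁ + j) / (x + a₁ + j) * ((x + b₂ + j) / (x + a₂ + j))))
      (Set.Ioi 0) := by
    refine fun x hx y hy hxy => mul_le_mul_of_nonneg_left ?_ (by positivity)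
    refine AntitoneOn.finsetProd (fun j _ => hfactor j) (fun j _ z (hz : 0 < z) => ?_) hx hy hxy
    exact mul_nonneg (div_nonneg (by linarith) (by linarith))
      (div_nonneg (by linarith) (by linarith))
  refine hprod.congr fun x (hx : 0 < x) => ?_
  dsimp only
  rw [GammaSeq_div_GammaSeq (by linarith) (by linarith) hn,
    GammaSeq_div_GammaSeq (by linarith) (by linarith) hn, prod_mul_distrib,
    add_sub_add_left_eq_sub, add_sub_add_left_eq_sub]
  ring

end Real

open Real

theorem statement7_general (a₁ a₂ b₁ b₂ : ℝ) (ha₁ : 0 ≤ a₁) (ha : a₁ ≤ a₂)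
    (hb : b₁ ≤ b₂) (h1 : a₁ ≤ b₁) (h2 : a₁ + a₂ ≤ b₁ + b₂) :
    AntitoneOn
      (fun x : ℝ =>
        Real.Gamma (x + a₁) * Real.Gamma (x + a₂) /
          (Real.Gamma (x + b₁) * Real.Gamma (x + b₂)))
      (Set.Ioi 0) := by
  have hlim : ∀ x ∈ Set.Ioi (0 : ℝ), Tendsto
      (fun n => GammaSeq (x + a₁) n / GammaSeq (x + b₁) n *
        (GammaSeq (x + a₂) n / GammaSeq (x + b₂) n)) atTop
      (𝓝 (Gamma (x + a₁) * Gamma (x + a₂) / (Gamma (x + b₁) * Gamma (x + b₂)))) := by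
    intro x (hx : 0 < x)
    rw [mul_div_mul_comm]
    exact ((GammaSeq_tendsto_Gamma _).div (GammaSeq_tendsto_Gamma _)
      (Gamma_pos_of_pos (by linarith)).ne').mul ((GammaSeq_tendsto_Gamma _).div
      (GammaSeq_tendsto_Gamma _) (Gamma_pos_of_pos (by linarith)).ne')
  exact antitoneOn_of_frequently_antitoneOn_of_tendsto
    ((eventually_ne_atTop 0).frequently.mono fun n hn =>
      antitoneOn_GammaSeq_div_mul_div ha₁ ha hb h1 h2 hn) hlim

/-- Alzer's monotonicity theorem (case `m = 2`): under the stated ordering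
conditions, `x ↦ Γ(x+a₁)Γ(x+a₂)/(Γ(x+b₁)Γ(x+b₂))` is decreasing on `(0, ∞)`. -/
theorem statement7 (a₁ a₂ b₁ b₂ : ℝ) (ha₁ : 0 ≤ a₁) (ha : a₁ ≤ a₂) (hb₁ : 0 ≤ b₁)
    (hb : b₁ ≤ b₂) (h1 : a₁ ≤ b₁) (h2 : a₁ + a₂ ≤ b₁ + b₂) :
    AntitoneOn
      (fun x : ℝ =>
        Real.Gamma (x + a₁) * Real.Gamma (x + a₂) /
          (Real.Gamma (x + b₁) * Real.Gamma (x + b₂)))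
      (Set.Ioi 0) :=
  statement7_general a₁ a₂ b₁ b₂ ha₁ ha hb h1 h2
end

section
/- For s ∈ (0,1) and δ ∈ [0, 1/2], the quantity G(s,δ) := (Γ(s+1)·Γ(3−s−δ/2)·Γ(1+δ/2)) / (Γ(3−s)·Γ(3−δ/2)·Γ(s+1+δ/2)) satisfies G(s,δ) ≤ 1/2. -/
/-!
Put `t = δ / 2` and `F(x) = Γ(x + 1) Γ(x + 3 - t) / (Γ(x + 3 - s - t) Γ(x + 1 + s))`; then
`G(s, δ) = F(t) / (Γ(3) F(0)) = F(t) / (2 F(0))`, so it suffices that `F` is non-increasing.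
By Euler's product formula, a ratio `Γ(x + a₁) Γ(x + a₂) / (Γ(x + b₁) Γ(x + b₂))` with
`a₁ + a₂ = b₁ + b₂` is the limit of `∏ⱼ (x + b₁ + j)(x + b₂ + j) / ((x + a₁ + j)(x + a₂ + j))`.
When `a₁ a₂ ≤ b₁ b₂` each factor is non-increasing in `x`, hence so is the ratio; for `F` this is
`3 - t ≤ (3 - s - t)(1 + s)`, i.e. `0 ≤ s (2 - s - t)`.
-/

open Filter Finset Topology

namespace Real

lemma tendsto_prod_div_Gamma_mul_Gamma {a₁ a₂ b₁ b₂ : ℝ} (ha₁ : 0 < a₁) (ha₂ : 0 < a₂)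
    (hb₁ : 0 < b₁) (hb₂ : 0 < b₂) (hsum : a₁ + a₂ = b₁ + b₂) :
    Tendsto (fun n : ℕ ↦ ∏ j ∈ range (n + 1), ((b₁ + j) * (b₂ + j) / ((a₁ + j) * (a₂ + j))))
      atTop (𝓝 (Gamma a₁ * Gamma a₂ / (Gamma b₁ * Gamma b₂))) := by
  have hΓ : Gamma b₁ * Gamma b₂ ≠ 0 := (mul_pos (Gamma_pos_of_pos hb₁) (Gamma_pos_of_pos hb₂)).ne'
  refine (((GammaSeq_tendsto_Gamma a₁).mul (GammaSeq_tendsto_Gamma a₂)).div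
    ((GammaSeq_tendsto_Gamma b₁).mul (GammaSeq_tendsto_Gamma b₂)) hΓ).congr'
    (eventually_atTop.2 ⟨1, fun n hn ↦ ?_⟩)
  have hn : (0 : ℝ) < n := by exact_mod_cast hn
  have hprod_pos {c : ℝ} (hc : 0 < c) : 0 < ∏ j ∈ range (n + 1), (c + j) :=
    prod_pos fun j _ ↦ by positivity
  have := hprod_pos ha₁; have := hprod_pos ha₂; have := hprod_pos hb₁; have := hprod_pos hb₂
  have : 0 < (n : ℝ) ^ b₁ * (n : ℝ) ^ b₂ := by positivity
  simp only [Pi.div_apply, GammaSeq, prod_div_distrib, prod_mul_distrib]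
  field_simp
  rw [← rpow_add hn, ← rpow_add hn, hsum]

/-- Since `a₁ + a₂ = b₁ + b₂`, the function is `1 + (b₁ b₂ - a₁ a₂) / ((u + a₁) (u + a₂))`. -/
lemma antitoneOn_add_mul_add_div_add_mul_add {a₁ a₂ b₁ b₂ : ℝ} (ha₁ : 0 < a₁) (ha₂ : 0 < a₂)
    (hsum : a₁ + a₂ = b₁ + b₂) (hprod : a₁ * a₂ ≤ b₁ * b₂) :
    AntitoneOn (fun u ↦ (u + b₁) * (u + b₂) / ((u + a₁) * (u + a₂))) (Set.Ici 0) := by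
  intro x (hx : 0 ≤ x) y (hy : 0 ≤ y) hxy
  rw [div_le_div_iff₀ (by positivity) (by positivity)]
  obtain rfl : b₂ = a₁ + a₂ - b₁ := by linarith
  nlinarith [mul_nonneg (sub_nonneg.2 hxy) (sub_nonneg.2 hprod), mul_nonneg hx ha₁.le]

theorem antitoneOn_Gamma_mul_Gamma_div_Gamma_mul_Gamma {a₁ a₂ b₁ b₂ : ℝ} (ha₁ : 0 < a₁)
    (ha₂ : 0 < a₂) (hsum : a₁ + a₂ = b₁ + b₂) (hprod : a₁ * a₂ ≤ b₁ * b₂) :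
    AntitoneOn (fun x ↦ Gamma (x + a₁) * Gamma (x + a₂) / (Gamma (x + b₁) * Gamma (x + b₂)))
      (Set.Ici 0) := by
  have hb₁ : 0 < b₁ := by nlinarith [mul_pos ha₁ ha₂]
  have hb₂ : 0 < b₂ := by nlinarith [mul_pos ha₁ ha₂]
  have hlim {x : ℝ} (hx : 0 ≤ x) :=
    tendsto_prod_div_Gamma_mul_Gamma (a₁ := x + a₁) (a₂ := x + a₂) (b₁ := x + b₁) (b₂ := x + b₂)
      (by positivity) (by positivity) (by positivity) (by positivity) (by linarith)
  intro x (hx : 0 ≤ x) y (hy : 0 ≤ y) hxy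
  refine le_of_tendsto_of_tendsto' (hlim hy) (hlim hx) fun n ↦
    prod_le_prod (fun j _ ↦ by positivity) fun j _ ↦ ?_
  simpa only [add_assoc, add_comm (j : ℝ)] using
    antitoneOn_add_mul_add_div_add_mul_add ha₁ ha₂ hsum hprod
      (by positivity : (0 : ℝ) ≤ x + j) (by positivity : (0 : ℝ) ≤ y + j) (by linarith)

end Real

open Real in
/-- The Gamma-quotient `G(s,δ)` is at most `1/2` for `s ∈ (0,1)`, `δ ∈ [0,1/2]`. -/
theorem statement8 (s δ : ℝ) (hs : s ∈ Set.Ioo (0 : ℝ) 1) (hδ : δ ∈ Set.Icc (0 : ℝ) (1 / 2)) :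
    Real.Gamma (s + 1) * Real.Gamma (3 - s - δ / 2) * Real.Gamma (1 + δ / 2) /
        (Real.Gamma (3 - s) * Real.Gamma (3 - δ / 2) * Real.Gamma (s + 1 + δ / 2)) ≤
      1 / 2 := by
  obtain ⟨hs0, hs1⟩ := hs
  have ht0 : 0 ≤ δ / 2 := by linarith [hδ.1]
  have ht1 : δ / 2 ≤ 1 / 4 := by linarith [hδ.2]
  have hF := antitoneOn_Gamma_mul_Gamma_div_Gamma_mul_Gamma (a₁ := 1) (a₂ := 3 - δ / 2)
    (b₁ := 3 - s - δ / 2) (b₂ := 1 + s) one_pos (by linarith) (by ring) (by nlinarith)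
    Set.self_mem_Ici ht0 ht0
  simp only [zero_add, Gamma_one, one_mul] at hF
  rw [show δ / 2 + (3 - δ / 2) = 3 by ring, show δ / 2 + (3 - s - δ / 2) = 3 - s by ring,
    show δ / 2 + (1 + s) = s + 1 + δ / 2 by ring, add_comm (δ / 2) 1, add_comm 1 s,
    (Gamma_ofNat_eq_factorial 2).trans (by norm_num : ((Nat.factorial 2 : ℕ) : ℝ) = 2)] at hF
  have := Gamma_pos_of_pos (by linarith : 0 < s + 1)
  have := Gamma_pos_of_pos (by linarith : 0 < 3 - s - δ / 2)
  have := Gamma_pos_of_pos (by linarith : 0 < 1 + δ / 2)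
  have := Gamma_pos_of_pos (by linarith : 0 < 3 - s)
  have := Gamma_pos_of_pos (by linarith : 0 < 3 - δ / 2)
  have := Gamma_pos_of_pos (by linarith : 0 < s + 1 + δ / 2)
  calc _ = Gamma (1 + δ / 2) * 2 / (Gamma (3 - s) * Gamma (s + 1 + δ / 2)) /
        (Gamma (3 - δ / 2) / (Gamma (3 - s - δ / 2) * Gamma (s + 1))) / 2 := by
        field_simp
    _ ≤ 1 / 2 := by
        gcongr
        exact div_le_one_of_le₀ hF (by positivity)
end

section
/- For s ∈ (0,1) and d ≥ 2, the function L(δ) := (Γ(2 + d/2 − s − δ/2)·Γ(1 + δ/2)) / (Γ(1 + d/2 − δ/2)·Γ(s + δ/2)) is strictly increasing in δ on [0, 1/2]. -/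
/-!
With `t = 1 - s` and `g x = Γ(x + t) / Γ(x)`, the quotient is `L(δ) = g(u) g(v)` for
`u = 1 + d/2 - δ/2` and `v = s + δ/2`; increasing `δ` moves `u` and `v` towards each other while
keeping `u + v` fixed. By Euler's product, `g(u) g(v)` is the limit of
`n^{2t} ∏ⱼ (u+j)(v+j) / ((u+j+t)(v+j+t))`, and each factor equals `p / (p + t(u+v+2j+t))` with
`p = (u+j)(v+j)`, which grows as the pair moves together. This gives monotonicity; strictness
follows by peeling off the factor `j = 0` with `Γ(x + 1) = x Γ(x)`.
-/

open Filter Topology Finset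
open scoped Nat

lemma div_add_mul_div_add_lt {t u v w : ℝ} (ht : 0 < t) (hv : 0 < v) (hw : 0 < w)
    (h : v + w < u) :
    u / (u + t) * (v / (v + t)) < (u - w) / (u - w + t) * ((v + w) / (v + w + t)) := by
  have hu : 0 < u := by linarith
  have huw : 0 < u - w := by linarith
  rw [div_mul_div_comm, div_mul_div_comm, div_lt_div_iff₀ (by positivity) (by positivity)]
  -- both products of denominators are `p + t(u + v + t)`, `p` the product of numerators
  nlinarith [mul_pos (mul_pos hw (sub_pos.2 h)) (mul_pos ht (by positivity : 0 < u + v + t))]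

noncomputable def gammaShiftRatio (t u : ℝ) : ℝ := Real.Gamma (u + t) / Real.Gamma u

lemma gammaShiftRatio_pos {t u : ℝ} (ht : 0 ≤ t) (hu : 0 < u) : 0 < gammaShiftRatio t u :=
  div_pos (Real.Gamma_pos_of_pos (by linarith)) (Real.Gamma_pos_of_pos hu)

lemma gammaShiftRatio_eq_mul_add_one {t u : ℝ} (hu : u ≠ 0) (hut : u + t ≠ 0) :
    gammaShiftRatio t u = u / (u + t) * gammaShiftRatio t (u + 1) := by
  rw [gammaShiftRatio, gammaShiftRatio, add_right_comm, Real.Gamma_add_one hut,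
    Real.Gamma_add_one hu, mul_div_mul_comm, ← mul_assoc, div_mul_div_cancel₀ hut, div_self hu,
    one_mul]

lemma gammaSeq_add_div_gammaSeq (t u : ℝ) {n : ℕ} (hn : n ≠ 0) :
    Real.GammaSeq (u + t) n / Real.GammaSeq u n =
      (n : ℝ) ^ t * ∏ j ∈ range (n + 1), (u + j) / (u + j + t) := by
  have hn₀ : (0 : ℝ) < n := by positivity
  have hshift : ∏ j ∈ range (n + 1), (u + t + j) = ∏ j ∈ range (n + 1), (u + j + t) :=
    prod_congr rfl fun j _ => add_right_comm u t j
  have hpow : (n : ℝ) ^ u ≠ 0 := (Real.rpow_pos_of_pos hn₀ u).ne'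
  have hfact : (n ! : ℝ) ≠ 0 := by positivity
  simp only [Real.GammaSeq, prod_div_distrib, Real.rpow_add hn₀, hshift, div_div_div_eq]
  field_simp

lemma tendsto_gammaShiftRatio (t : ℝ) {u : ℝ} (hu : Real.Gamma u ≠ 0) :
    Tendsto (fun n : ℕ => (n : ℝ) ^ t * ∏ j ∈ range (n + 1), (u + j) / (u + j + t)) atTop
      (𝓝 (gammaShiftRatio t u)) :=
  ((Real.GammaSeq_tendsto_Gamma _).div (Real.GammaSeq_tendsto_Gamma u) hu).congr'
    (eventually_ne_atTop 0 |>.mono fun _ hn => gammaSeq_add_div_gammaSeq t u hn)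

lemma gammaShiftRatio_mul_le {t u v w : ℝ} (ht : 0 < t) (hv : 0 < v) (hw : 0 < w)
    (h : v + w < u) :
    gammaShiftRatio t u * gammaShiftRatio t v ≤
      gammaShiftRatio t (u - w) * gammaShiftRatio t (v + w) := by
  have hΓ : ∀ {x : ℝ}, 0 < x → Real.Gamma x ≠ 0 := fun hx => (Real.Gamma_pos_of_pos hx).ne'
  refine le_of_tendsto_of_tendsto'
    ((tendsto_gammaShiftRatio t (hΓ (by linarith))).mul (tendsto_gammaShiftRatio t (hΓ hv)))
    ((tendsto_gammaShiftRatio t (hΓ (by linarith))).mul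
      (tendsto_gammaShiftRatio t (hΓ (by linarith)))) fun n => ?_
  rw [mul_mul_mul_comm, ← prod_mul_distrib, mul_mul_mul_comm (_ ^ t), ← prod_mul_distrib]
  refine mul_le_mul_of_nonneg_left (prod_le_prod (fun j _ => ?_) fun j _ => ?_) (by positivity)
  · have hj : (0 : ℝ) ≤ j := j.cast_nonneg
    have hu : 0 < u := by linarith
    positivity
  · have hj : (0 : ℝ) ≤ j := j.cast_nonneg
    convert (div_add_mul_div_add_lt (u := u + j) (v := v + j) ht (by positivity) hw
      (by linarith)).le using 3 <;> ring

lemma gammaShiftRatio_mul_lt {t u v w : ℝ} (ht : 0 < t) (hv : 0 < v) (hw : 0 < w)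
    (h : v + w < u) :
    gammaShiftRatio t u * gammaShiftRatio t v <
      gammaShiftRatio t (u - w) * gammaShiftRatio t (v + w) := by
  have hu : 0 < u := by linarith
  have huw : 0 < u - w := by linarith
  have hg : ∀ {x : ℝ}, 0 < x → 0 < gammaShiftRatio t x := gammaShiftRatio_pos ht.le
  have hrec : ∀ {x : ℝ}, 0 < x →
      gammaShiftRatio t x = x / (x + t) * gammaShiftRatio t (x + 1) := fun hx =>
    gammaShiftRatio_eq_mul_add_one hx.ne' (by linarith)
  calc gammaShiftRatio t u * gammaShiftRatio t v
      = u / (u + t) * (v / (v + t)) * (gammaShiftRatio t (u + 1) * gammaShiftRatio t (v + 1)) := by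
        rw [hrec hu, hrec hv]; ring
    _ < (u - w) / (u - w + t) * ((v + w) / (v + w + t)) *
          (gammaShiftRatio t (u + 1) * gammaShiftRatio t (v + 1)) :=
        mul_lt_mul_of_pos_right (div_add_mul_div_add_lt ht hv hw h)
          (mul_pos (hg (by linarith)) (hg (by linarith)))
    _ ≤ (u - w) / (u - w + t) * ((v + w) / (v + w + t)) *
          (gammaShiftRatio t (u + 1 - w) * gammaShiftRatio t (v + 1 + w)) :=
        mul_le_mul_of_nonneg_left (gammaShiftRatio_mul_le ht (by linarith) hw (by linarith))
          (by positivity)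
    _ = gammaShiftRatio t (u - w) * gammaShiftRatio t (v + w) := by
        rw [hrec huw, hrec (by linarith : 0 < v + w), sub_add_eq_add_sub u w 1,
          add_right_comm v w 1]
        ring

/-- The Gamma-quotient `L(δ)` is strictly increasing on `[0, 1/2]`. -/
theorem statement11 (d : ℕ) (hd : 2 ≤ d) (s : ℝ) (hs : s ∈ Set.Ioo (0 : ℝ) 1) :
    StrictMonoOn
      (fun δ : ℝ =>
        Real.Gamma (2 + (d : ℝ) / 2 - s - δ / 2) * Real.Gamma (1 + δ / 2) /
          (Real.Gamma (1 + (d : ℝ) / 2 - δ / 2) * Real.Gamma (s + δ / 2)))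
      (Set.Icc 0 (1 / 2)) := by
  obtain ⟨hs₀, hs₁⟩ := hs
  have hd' : (2 : ℝ) ≤ d := by exact_mod_cast hd
  have hL : ∀ δ : ℝ,
      Real.Gamma (2 + (d : ℝ) / 2 - s - δ / 2) * Real.Gamma (1 + δ / 2) /
          (Real.Gamma (1 + (d : ℝ) / 2 - δ / 2) * Real.Gamma (s + δ / 2)) =
        gammaShiftRatio (1 - s) (1 + d / 2 - δ / 2) * gammaShiftRatio (1 - s) (s + δ / 2) := by
    intro δ
    rw [gammaShiftRatio, gammaShiftRatio, mul_div_mul_comm]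
    congr 3 <;> ring
  rintro δ₁ ⟨hδ₁, -⟩ δ₂ ⟨-, hδ₂⟩ hδ
  simp only [hL]
  have key := gammaShiftRatio_mul_lt (t := 1 - s) (u := 1 + d / 2 - δ₁ / 2) (v := s + δ₁ / 2)
    (w := (δ₂ - δ₁) / 2) (by linarith) (by linarith) (by linarith) (by linarith)
  rwa [show 1 + (d : ℝ) / 2 - δ₁ / 2 - (δ₂ - δ₁) / 2 = 1 + d / 2 - δ₂ / 2 by ring,
    show s + δ₁ / 2 + (δ₂ - δ₁) / 2 = s + δ₂ / 2 by ring] at key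
end

section
/- Let d ≥ 2, s ∈ (0,1), and define R(d) := (Γ(d/2)/Γ(d/2 − s + 1)) · (Γ(d/2 − s − δ/2 + 2)/Γ(d/2 − δ/2 + 1)) for fixed s ∈ (0,1) and δ ∈ [0, 1/2]. Then R(d) ≥ 1 for all d ≥ 2. -/
/-!
No monotonicity in `d` is needed. With `x = d / 2`, the four arguments satisfy
`(x - s + 1) + (x - δ / 2 + 1) = x + (x - s - δ / 2 + 2)`, and both summands on the left are
at least `x`. For a convex function `φ`, `φ c + φ e ≤ φ a + φ b` whenever `c + e = a + b` and
`c, e ≥ a`, since `c` and `e` are then convex combinations of `a` and `b` with swapped weights.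
Applying this to the log-convex function `Γ` gives the inequality.
-/

open Real Set

theorem ConvexOn.map_add_map_le_of_add_eq {s : Set ℝ} {f : ℝ → ℝ} (hf : ConvexOn ℝ s f)
    {a b c e : ℝ} (ha : a ∈ s) (hb : b ∈ s) (hac : a ≤ c) (hae : a ≤ e) (hsum : c + e = a + b) :
    f c + f e ≤ f a + f b := by
  have hc : c ∈ segment ℝ a b := by
    rw [segment_eq_Icc (by linarith)]
    exact ⟨hac, by linarith⟩
  obtain ⟨θ, φ, hθ, hφ, hθφ, rfl⟩ := hc
  have he : e = φ • a + θ • b := by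
    simp only [smul_eq_mul] at hsum ⊢
    linear_combination hsum - (a + b) * hθφ
  subst he
  calc f (θ • a + φ • b) + f (φ • a + θ • b)
      ≤ (θ • f a + φ • f b) + (φ • f a + θ • f b) :=
        add_le_add (hf.2 ha hb hθ hφ hθφ) (hf.2 ha hb hφ hθ (by rw [add_comm, hθφ]))
    _ = f a + f b := by simp only [smul_eq_mul]; linear_combination (f a + f b) * hθφ

theorem Real.Gamma_mul_Gamma_le_of_add_eq {a b c e : ℝ} (ha : 0 < a) (hac : a ≤ c) (hae : a ≤ e)
    (hsum : c + e = a + b) : Gamma c * Gamma e ≤ Gamma a * Gamma b := by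
  have hpos : ∀ {x}, a ≤ x → 0 < Gamma x := fun hx => Gamma_pos_of_pos (ha.trans_le hx)
  have hab : a ≤ b := by linarith
  have hlog := convexOn_log_Gamma.map_add_map_le_of_add_eq (mem_Ioi.2 ha)
    (mem_Ioi.2 (ha.trans_le hab)) hac hae hsum
  simp only [Function.comp_apply, ← log_mul (hpos hac).ne' (hpos hae).ne',
    ← log_mul (hpos le_rfl).ne' (hpos hab).ne'] at hlog
  exact (log_le_log_iff (mul_pos (hpos hac) (hpos hae)) (mul_pos (hpos le_rfl) (hpos hab))).1 hlog

/-- The Gamma-quotient `R(d)` is at least `1` for all `d ≥ 2`. -/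
theorem statement13 (d : ℕ) (hd : 2 ≤ d) (s δ : ℝ) (hs : s ∈ Set.Ioo (0 : ℝ) 1)
    (hδ : δ ∈ Set.Icc (0 : ℝ) (1 / 2)) :
    1 ≤ Real.Gamma ((d : ℝ) / 2) / Real.Gamma ((d : ℝ) / 2 - s + 1) *
        (Real.Gamma ((d : ℝ) / 2 - s - δ / 2 + 2) / Real.Gamma ((d : ℝ) / 2 - δ / 2 + 1)) := by
  have hx : (0 : ℝ) < d / 2 := by
    have : (2 : ℝ) ≤ d := by exact_mod_cast hd
    linarith
  have hc : (d : ℝ) / 2 ≤ d / 2 - s + 1 := by linarith [hs.2]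
  have he : (d : ℝ) / 2 ≤ d / 2 - δ / 2 + 1 := by linarith [hδ.2]
  rw [div_mul_div_comm, one_le_div₀ (mul_pos (Gamma_pos_of_pos (hx.trans_le hc))
    (Gamma_pos_of_pos (hx.trans_le he)))]
  exact Gamma_mul_Gamma_le_of_add_eq hx hc he (by ring)
end
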